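/- Let ρ_A be a density operator on ℂ^d, ε ∈ (0,1), γ = H̄_s^{1−√(1−ε)}(A)_ρ, and Q = {ρ_A ≥ 2^{−γ}𝟙} the projector onto the eigenspace of ρ_A with eigenvalues at least 2^{−γ}. Then Tr[Q] ≤ 2^γ and Tr[Qρ_A] ≥ √(1−ε), so the compression map ρ ↦ QρQ + Tr[ρ(𝟙−Q)]|φ⟩⟨φ| (for a fixed pure state |φ⟩ in the range of Q) followed by the embedding decompressor achieves entanglement fidelity squared at least 1−ε on any purification ρ_AR. -/

import Mathlib

open Matrix Finset
open scoped ComplexOrder Kronecker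

/-- Outer product `|v⟩⟨v|`. -/
noncomputable def outer {n : Type*} (v : n → ℂ) : Matrix n n ℂ :=
  Matrix.of fun i j => v i * star (v j)

/-- Partial trace over the first (A) factor. -/
noncomputable def ptraceA {dA dR : Type*} [Fintype dA]
    (σ : Matrix (dA × dR) (dA × dR) ℂ) : Matrix dR dR ℂ :=
  Matrix.of fun r r' => ∑ a, σ (a, r) (a, r')

/-- Partial trace over the second (R) factor. -/
noncomputable def ptraceR {dA dR : Type*} [Fintype dR]
    (σ : Matrix (dA × dR) (dA × dR) ℂ) : Matrix dA dA ℂ :=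
  Matrix.of fun a a' => ∑ r, σ (a, r) (a', r)

/-- Spectral projector of a Hermitian matrix onto eigenspaces whose eigenvalue
satisfies the predicate `f` (`f x = true` selected). -/
noncomputable def specProj {d : ℕ} {ρ : Matrix (Fin d) (Fin d) ℂ}
    (hρ : ρ.IsHermitian) (f : ℝ → Bool) : Matrix (Fin d) (Fin d) ℂ :=
  (hρ.eigenvectorUnitary : Matrix (Fin d) (Fin d) ℂ) *
    Matrix.diagonal (fun i => if f (hρ.eigenvalues i) then (1 : ℂ) else 0) *
    star (hρ.eigenvectorUnitary : Matrix (Fin d) (Fin d) ℂ)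


/-!
In an eigenbasis of `ρ` with eigenvalues `μᵢ`, every trace in the statement becomes a sum over
eigenvalues: `Tr[(ρ - c)·{ρ > c}] = ∑ᵢ (μᵢ - c)⁺`. As a function of `t` with `c = 2^t` this is
continuous, vanishes for `t > 0` and is close to `1` for `t` very negative, so the supremum
defining `-γ` is attained and `∑ᵢ (μᵢ - 2^{-γ})⁺ ≥ √(1-ε)`. Since `Q` keeps exactly the
eigenvalues `≥ 2^{-γ}`, that sum is `Tr[Q(ρ - 2^{-γ})] ≤ Tr[Qρ]`, and Markov's inequality bounds
the number of such eigenvalues by `2^γ`. In the fidelity, the `QσQ` branch contributes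
`⟨v|Q ⊗ 1|v⟩² = Tr[Qρ]²`, and the other branch is `⟨v|M|v⟩` for a positive semidefinite `M`.
-/

section RealSums

variable {ι : Type*} [Fintype ι]

theorem card_filter_le_le_inv_of_sum_eq_one {p : ι → ℝ} (hp : ∀ i, 0 ≤ p i)
    (hsum : ∑ i, p i = 1) {c : ℝ} (hc : 0 < c) : (#{i | c ≤ p i} : ℝ) ≤ c⁻¹ := by
  rw [← one_mul c⁻¹, le_mul_inv_iff₀ hc]
  calc (#{i | c ≤ p i} : ℝ) * c = ∑ i with c ≤ p i, c := by rw [sum_const, nsmul_eq_mul]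
    _ ≤ ∑ i with c ≤ p i, p i := sum_le_sum fun i hi => (mem_filter.1 hi).2
    _ ≤ ∑ i, p i := sum_le_sum_of_subset_of_nonneg (filter_subset _ _) fun i _ _ => hp i
    _ = 1 := hsum

theorem le_sum_posPart_sub_rpow_sSup {p : ι → ℝ} (hp : ∀ i, 0 ≤ p i) (hsum : ∑ i, p i = 1)
    {b : ℝ} (hb : 1 < b) {δ : ℝ} (hδ0 : 0 < δ) (hδ1 : δ < 1) :
    δ ≤ ∑ i, (p i - b ^ sSup {t : ℝ | δ ≤ ∑ i, (p i - b ^ t)⁺})⁺ := by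
  set S := {t : ℝ | δ ≤ ∑ i, (p i - b ^ t)⁺}
  have hb0 : 0 < b := by linarith
  have hclosed : IsClosed S :=
    isClosed_le continuous_const (by fun_prop (disch := exact hb0.ne'))
  have hcard : 0 < Fintype.card ι := by
    by_contra! h
    have : IsEmpty ι := Fintype.card_eq_zero_iff.mp (by omega)
    simp at hsum
  -- below the level `(1 - δ) / card ι` the positive parts already sum to at least `δ`
  have hne : S.Nonempty := by
    have hc : 0 < (1 - δ) / Fintype.card ι := by
      have : (0 : ℝ) < Fintype.card ι := by exact_mod_cast hcard
      exact div_pos (by linarith) this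
    refine ⟨Real.logb b ((1 - δ) / Fintype.card ι), ?_⟩
    rw [Set.mem_ofPred_eq, Real.rpow_logb hb0 hb.ne' hc]
    calc δ = ∑ i, (p i - (1 - δ) / Fintype.card ι) := by
          rw [sum_sub_distrib, hsum, sum_const, card_univ, nsmul_eq_mul]
          field_simp
          ring
      _ ≤ _ := sum_le_sum fun i _ => le_posPart _
  have hbdd : BddAbove S := by
    refine ⟨0, fun t (ht : δ ≤ _) => ?_⟩
    by_contra! h
    have hbt : 1 < b ^ t := Real.one_lt_rpow hb h
    have hzero : ∑ i, (p i - b ^ t)⁺ = 0 := sum_eq_zero fun i _ => by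
      have := single_le_sum (fun j _ => hp j) (mem_univ i)
      rw [posPart_eq_zero]
      linarith
    linarith
  exact hclosed.csSup_mem hne hbdd

end RealSums

open scoped MatrixOrder in
theorem IsStarProjection.posSemidef {n 𝕜 : Type*} [Fintype n] [RCLike 𝕜] {P : Matrix n n 𝕜}
    (hP : IsStarProjection P) : P.PosSemidef :=
  Matrix.nonneg_iff_posSemidef.mp hP.nonneg

theorem IsStarProjection.kronecker {m n R : Type*} [Fintype m] [Fintype n] [CommSemiring R]
    [StarRing R] {P : Matrix m m R} {P' : Matrix n n R} (hP : IsStarProjection P)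
    (hP' : IsStarProjection P') : IsStarProjection (P ⊗ₖ P') where
  isIdempotentElem := by
    rw [IsIdempotentElem, ← mul_kronecker_mul, hP.isIdempotentElem.eq, hP'.isIdempotentElem.eq]
  isSelfAdjoint := by
    rw [IsSelfAdjoint, star_eq_conjTranspose, conjTranspose_kronecker, ← star_eq_conjTranspose,
      ← star_eq_conjTranspose, hP.isSelfAdjoint.star_eq, hP'.isSelfAdjoint.star_eq]

theorem IsStarProjection.re_trace_mul_sub_smul_one_le {n : Type*} [Fintype n] [DecidableEq n]
    {P : Matrix n n ℂ} (hP : IsStarProjection P) (A : Matrix n n ℂ) {c : ℝ} (hc : 0 ≤ c) :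
    (P * (A - (c : ℂ) • 1)).trace.re ≤ (P * A).trace.re := by
  rw [Matrix.mul_sub, Matrix.mul_smul, Matrix.mul_one, trace_sub, trace_smul, Complex.sub_re,
    smul_eq_mul, Complex.re_ofReal_mul, sub_le_self_iff]
  exact mul_nonneg hc (Complex.nonneg_iff.mp hP.posSemidef.trace_nonneg).1

theorem Matrix.trace_conjStarAlgAut {n R : Type*} [Fintype n] [DecidableEq n] [CommRing R]
    [StarRing R] (U : unitary (Matrix n n R)) (A : Matrix n n R) :
    (Unitary.conjStarAlgAut R _ U A).trace = A.trace := by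
  rw [Unitary.conjStarAlgAut_apply, trace_mul_cycle, Unitary.star_mul_self_of_mem U.prop,
    Matrix.one_mul]

namespace Matrix.IsHermitian

variable {d : ℕ} {ρ : Matrix (Fin d) (Fin d) ℂ} (hρ : ρ.IsHermitian)

theorem specProj_eq_conjStarAlgAut (f : ℝ → Bool) :
    specProj hρ f = Unitary.conjStarAlgAut ℂ _ hρ.eigenvectorUnitary
      (diagonal fun i => if f (hρ.eigenvalues i) then 1 else 0) := rfl

theorem isStarProjection_specProj (f : ℝ → Bool) : IsStarProjection (specProj hρ f) := by
  rw [specProj_eq_conjStarAlgAut]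
  refine IsStarProjection.map ⟨?_, ?_⟩ _
  · rw [IsIdempotentElem, diagonal_mul_diagonal]
    congr 1
    ext i
    split_ifs <;> simp
  · rw [IsSelfAdjoint, star_eq_conjTranspose, diagonal_conjTranspose]
    congr 1
    ext i
    split_ifs with h <;> simp [h]

theorem trace_specProj (f : ℝ → Bool) :
    (specProj hρ f).trace = #{i | f (hρ.eigenvalues i)} := by
  rw [specProj_eq_conjStarAlgAut, trace_conjStarAlgAut, trace_diagonal, sum_boole]

theorem trace_specProj_mul_sub_smul_one (c : ℝ) (f : ℝ → Bool) :
    (specProj hρ f * (ρ - (c : ℂ) • 1)).trace =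
      ((∑ i, if f (hρ.eigenvalues i) then hρ.eigenvalues i - c else 0 : ℝ) : ℂ) := by
  have hdiag : ρ - (c : ℂ) • 1 = Unitary.conjStarAlgAut ℂ _ hρ.eigenvectorUnitary
      (diagonal fun i => ((hρ.eigenvalues i - c : ℝ) : ℂ)) := by
    conv_lhs => rw [hρ.spectral_theorem]
    rw [← map_one (Unitary.conjStarAlgAut ℂ _ hρ.eigenvectorUnitary), ← map_smul, ← map_sub]
    congr 1
    ext i j
    by_cases h : i = j <;> simp [h]
  rw [hdiag, specProj_eq_conjStarAlgAut, ← map_mul, trace_conjStarAlgAut, diagonal_mul_diagonal,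
    trace_diagonal, Complex.ofReal_sum]
  refine sum_congr rfl fun i _ => ?_
  split_ifs <;> simp

theorem trace_specProj_mul_sub_smul_one_eq_sum_posPart (c : ℝ) {f : ℝ → Bool}
    (hgt : ∀ x, c < x → f x) (hge : ∀ x, f x → c ≤ x) :
    (specProj hρ f * (ρ - (c : ℂ) • 1)).trace = ((∑ i, (hρ.eigenvalues i - c)⁺ : ℝ) : ℂ) := by
  rw [trace_specProj_mul_sub_smul_one]
  congr 2
  funext i
  split_ifs with h
  · exact (posPart_eq_self.mpr (sub_nonneg.mpr (hge _ h))).symm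
  · exact (posPart_eq_zero.mpr (sub_nonpos.mpr (not_lt.mp fun h' => h (hgt _ h')))).symm

end Matrix.IsHermitian

namespace Matrix.PosSemidef

variable {d : ℕ} {ρ : Matrix (Fin d) (Fin d) ℂ} (hρ : ρ.PosSemidef)

theorem sum_eigenvalues_eq_one (hρ1 : ρ.trace = 1) : ∑ i, hρ.1.eigenvalues i = 1 := by
  simpa [hρ.1.trace_eq_sum_eigenvalues] using congrArg Complex.re hρ1

theorem re_trace_specProj_le_inv (hρ1 : ρ.trace = 1) {c : ℝ} (hc : 0 < c) :
    (specProj hρ.1 (fun x => c ≤ x)).trace.re ≤ c⁻¹ := by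
  rw [hρ.1.trace_specProj, Complex.natCast_re]
  simpa only [decide_eq_true_eq] using
    card_filter_le_le_inv_of_sum_eq_one hρ.eigenvalues_nonneg (hρ.sum_eigenvalues_eq_one hρ1) hc

theorem le_sum_posPart_sub_rpow_neg (hρ1 : ρ.trace = 1) {δ : ℝ} (hδ0 : 0 < δ) (hδ1 : δ < 1)
    {γ : ℝ} (hγ : γ = -sSup {t : ℝ | δ ≤
      (((ρ - (((2 : ℝ) ^ t : ℝ) : ℂ) • 1) * specProj hρ.1 (fun x => (2 : ℝ) ^ t < x)).trace).re}) :
    δ ≤ ∑ i, (hρ.1.eigenvalues i - 2 ^ (-γ))⁺ := by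
  have hS : {t : ℝ | δ ≤
      (((ρ - (((2 : ℝ) ^ t : ℝ) : ℂ) • 1) * specProj hρ.1 (fun x => (2 : ℝ) ^ t < x)).trace).re} =
      {t : ℝ | δ ≤ ∑ i, (hρ.1.eigenvalues i - 2 ^ t)⁺} := by
    ext t
    rw [Set.mem_ofPred_eq, Set.mem_ofPred_eq, trace_mul_comm,
      hρ.1.trace_specProj_mul_sub_smul_one_eq_sum_posPart _ (fun x hx => decide_eq_true hx)
        (fun x hx => (of_decide_eq_true hx).le), Complex.ofReal_re]
  rw [hγ, neg_neg, hS]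
  exact le_sum_posPart_sub_rpow_sSup hρ.eigenvalues_nonneg (hρ.sum_eigenvalues_eq_one hρ1)
    one_lt_two hδ0 hδ1

end Matrix.PosSemidef

section Outer

variable {n : Type*} [Fintype n]

theorem posSemidef_outer (v : n → ℂ) : (outer v).PosSemidef :=
  posSemidef_vecMulVec_self_star v

theorem trace_outer_mul (v : n → ℂ) (B : Matrix n n ℂ) :
    (outer v * B).trace = star v ⬝ᵥ B *ᵥ v := by
  change (vecMulVec v (star v) * B).trace = _
  rw [vecMulVec_mul, trace_vecMulVec, dotProduct_mulVec, dotProduct_comm]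

theorem outer_mul_mul_outer (v : n → ℂ) (B : Matrix n n ℂ) :
    outer v * B * outer v = (star v ⬝ᵥ B *ᵥ v) • outer v := by
  change vecMulVec v (star v) * B * vecMulVec v (star v) = _ • vecMulVec v (star v)
  rw [vecMulVec_mul, vecMulVec_mul_vecMulVec, vecMulVec_smul, dotProduct_mulVec]

end Outer

section PartialTrace

variable {m n : Type*} [Fintype m]

theorem trace_kronecker_one_mul [Fintype n] [DecidableEq n] (B : Matrix m m ℂ)
    (σ : Matrix (m × n) (m × n) ℂ) :
    ((B ⊗ₖ (1 : Matrix n n ℂ)) * σ).trace = (B * ptraceR σ).trace := by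
  simp only [trace, Matrix.diag, mul_apply, kroneckerMap_apply, ptraceR, of_apply, one_apply,
    Fintype.sum_prod_type, mul_ite, mul_one, mul_zero, ite_mul, zero_mul, mul_sum, sum_ite_eq,
    mem_univ, if_true]
  exact sum_congr rfl fun a _ => sum_comm

theorem ptraceA_kronecker_one_mul_comm [Fintype n] [DecidableEq n] (B : Matrix m m ℂ)
    (σ : Matrix (m × n) (m × n) ℂ) :
    ptraceA ((B ⊗ₖ (1 : Matrix n n ℂ)) * σ) = ptraceA (σ * (B ⊗ₖ (1 : Matrix n n ℂ))) := by
  ext r r'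
  simp only [ptraceA, of_apply, mul_apply, kroneckerMap_apply, one_apply, Fintype.sum_prod_type,
    mul_ite, mul_one, mul_zero, ite_mul, zero_mul, sum_ite_eq, sum_ite_eq', mem_univ, if_true]
  rw [sum_comm]
  exact sum_congr rfl fun a _ => sum_congr rfl fun b _ => mul_comm _ _

theorem Matrix.PosSemidef.ptraceA {σ : Matrix (m × n) (m × n) ℂ} (hσ : σ.PosSemidef) :
    (_root_.ptraceA σ).PosSemidef := by
  have hblocks : _root_.ptraceA σ = ∑ a, σ.submatrix (a, ·) (a, ·) := by
    ext r r'
    simp [_root_.ptraceA, sum_apply]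
  rw [hblocks]
  exact posSemidef_sum _ fun a _ => hσ.submatrix _

theorem Matrix.PosSemidef.ptraceA_kronecker_one_mul [Fintype n] [DecidableEq n]
    {P : Matrix m m ℂ} (hP : IsStarProjection P) {σ : Matrix (m × n) (m × n) ℂ}
    (hσ : σ.PosSemidef) : (_root_.ptraceA ((P ⊗ₖ (1 : Matrix n n ℂ)) * σ)).PosSemidef := by
  have hE := hP.kronecker (IsStarProjection.one (Matrix n n ℂ))
  have hEσE := hσ.mul_mul_conjTranspose_same (P ⊗ₖ (1 : Matrix n n ℂ))
  rw [← star_eq_conjTranspose, hE.isSelfAdjoint.star_eq] at hEσE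
  rw [← hE.isIdempotentElem.eq, Matrix.mul_assoc, ptraceA_kronecker_one_mul_comm]
  exact hEσE.ptraceA

end PartialTrace

theorem sq_re_trace_mul_ptraceR_le_re_trace_outer_mul {m n : Type*} [Fintype m] [Fintype n]
    [DecidableEq m] [DecidableEq n] {P : Matrix m m ℂ} (hP : IsStarProjection P)
    (v : m × n → ℂ) (φ : m → ℂ) :
    (P * ptraceR (outer v)).trace.re ^ 2 ≤
      (outer v * ((P ⊗ₖ (1 : Matrix n n ℂ)) * outer v * (P ⊗ₖ (1 : Matrix n n ℂ)) +
        outer φ ⊗ₖ ptraceA (((1 - P) ⊗ₖ (1 : Matrix n n ℂ)) * outer v))).trace.re := by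
  set E := P ⊗ₖ (1 : Matrix n n ℂ)
  have hz : (P * ptraceR (outer v)).trace = star v ⬝ᵥ E *ᵥ v := by
    rw [← trace_kronecker_one_mul, trace_mul_comm, trace_outer_mul]
  have hz0 : 0 ≤ star v ⬝ᵥ E *ᵥ v :=
    (hP.posSemidef.kronecker PosSemidef.one).dotProduct_mulVec_nonneg v
  have hfirst : (outer v * (E * outer v * E)).trace = (star v ⬝ᵥ E *ᵥ v) ^ 2 := by
    rw [← Matrix.mul_assoc, ← Matrix.mul_assoc, outer_mul_mul_outer, smul_mul, trace_smul,
      trace_outer_mul, smul_eq_mul, sq]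
  have hsecond : 0 ≤ (outer v * (outer φ ⊗ₖ
      ptraceA (((1 - P) ⊗ₖ (1 : Matrix n n ℂ)) * outer v))).trace := by
    rw [trace_outer_mul]
    exact ((posSemidef_outer φ).kronecker ((posSemidef_outer v).ptraceA_kronecker_one_mul
      hP.one_sub)).dotProduct_mulVec_nonneg v
  obtain ⟨-, him⟩ := Complex.nonneg_iff.mp hz0
  rw [Matrix.mul_add, trace_add, Complex.add_re, hfirst, hz, sq, sq, Complex.mul_re, ← him]
  linarith [(Complex.nonneg_iff.mp hsecond).1]

/-- let `γ = H̄_s^{1−√(1−ε)}(A)_ρ` and `Q = {ρ ≥ 2^{−γ}𝟙}`. Then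
`Tr Q ≤ 2^γ`, `Tr[Q(ρ − 2^{−γ}𝟙)] ≥ 1 − (1 − √(1−ε))`, hence `Tr[Qρ] ≥ √(1−ε)`, and
for every purification `ρ_AR` of `ρ` the compression map
`σ ↦ QσQ + Tr[σ(𝟙−Q)]|φ⟩⟨φ|` (with `|φ⟩` a unit vector in the range of `Q`) followed
by the embedding decompressor achieves entanglement fidelity squared
`F² = Tr[ρ_AR · out] ≥ (Tr[Qρ])² ≥ 1 − ε`. -/
theorem compression_achievability {d : ℕ} (ρ : Matrix (Fin d) (Fin d) ℂ)
    (hρ : ρ.PosSemidef) (hρ1 : ρ.trace = 1) (ε : ℝ) (hε : ε ∈ Set.Ioo (0 : ℝ) 1)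
    (γ : ℝ)
    (hγ : γ = -sSup {γ' : ℝ |
      1 - (1 - Real.sqrt (1 - ε)) ≤
        (((ρ - (((2 : ℝ) ^ γ' : ℝ) : ℂ) • (1 : Matrix (Fin d) (Fin d) ℂ)) *
          specProj hρ.1 (fun x => (2 : ℝ) ^ γ' < x)).trace).re})
    (Q : Matrix (Fin d) (Fin d) ℂ)
    (hQ : Q = specProj hρ.1 (fun x => (2 : ℝ) ^ (-γ) ≤ x)) :
    (Q.trace).re ≤ (2 : ℝ) ^ γ ∧
    1 - (1 - Real.sqrt (1 - ε)) ≤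
      ((Q * (ρ - (((2 : ℝ) ^ (-γ) : ℝ) : ℂ) • (1 : Matrix (Fin d) (Fin d) ℂ))).trace).re ∧
    Real.sqrt (1 - ε) ≤ ((Q * ρ).trace).re ∧
    (∀ (dR : ℕ) (v : Fin d × Fin dR → ℂ), ptraceR (outer v) = ρ →
      ∀ φ : Fin d → ℂ, Q *ᵥ φ = φ → star φ ⬝ᵥ φ = 1 →
        (((Q * ρ).trace).re) ^ 2 ≤
          ((outer v *
            ((Q ⊗ₖ (1 : Matrix (Fin dR) (Fin dR) ℂ)) * outer v *
              (Q ⊗ₖ (1 : Matrix (Fin dR) (Fin dR) ℂ)) +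
             (outer φ) ⊗ₖ ptraceA
               ((((1 : Matrix (Fin d) (Fin d) ℂ) - Q) ⊗ₖ
                 (1 : Matrix (Fin dR) (Fin dR) ℂ)) * outer v))).trace).re ∧
        1 - ε ≤ (((Q * ρ).trace).re) ^ 2) := by
  have hQproj : IsStarProjection Q := hQ ▸ hρ.1.isStarProjection_specProj _
  have htail : 1 - (1 - Real.sqrt (1 - ε)) ≤
      ((Q * (ρ - (((2 : ℝ) ^ (-γ) : ℝ) : ℂ) • 1)).trace).re := by
    rw [hQ, hρ.1.trace_specProj_mul_sub_smul_one_eq_sum_posPart _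
      (fun x hx => decide_eq_true hx.le) (fun x hx => of_decide_eq_true hx), Complex.ofReal_re]
    refine hρ.le_sum_posPart_sub_rpow_neg hρ1 ?_ ?_ hγ <;> rw [sub_sub_cancel]
    · exact Real.sqrt_pos.mpr (by linarith [hε.2])
    · exact (Real.sqrt_lt' one_pos).mpr (by linarith [hε.1])
  have hQρ : Real.sqrt (1 - ε) ≤ (Q * ρ).trace.re :=
    ((sub_sub_cancel (1 : ℝ) _).ge.trans htail).trans
      (hQproj.re_trace_mul_sub_smul_one_le ρ (by positivity))
  refine ⟨?_, htail, hQρ, fun dR v hv φ _ _ => ⟨?_, (Real.sqrt_le_iff.mp hQρ).2⟩⟩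
  · rw [hQ, ← inv_inv ((2 : ℝ) ^ γ), ← Real.rpow_neg zero_le_two]
    exact hρ.re_trace_specProj_le_inv hρ1 (by positivity)
  · rw [← hv]
    exact sq_re_trace_mul_ptraceR_le_re_trace_outer_mul hQproj v φ
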